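/- arXiv:math/0510611 — 2 statements merged into one kernel-verified Lean document; each statement's English description precedes it below -/
import Mathlib

section
/- For positive reals p_1,…,p_m in (0,1), the 2m×2m block matrix C_2 = [[C_{1,1}, C_{1,2}],[C_{2,1}, C_{2,2}^2]] is positive definite, where C_{2,2}^2 has diagonal entries 2m(1+p_j)^2/(m+1) and off-diagonal entries −2(1+p_j)(1+p_k)/(m+1); its r-th leading principal minor for m+1 ≤ r ≤ 2m equals [p_1⋯p_m (1+p_1)⋯(1+p_{r−m})]^2 (2m+1−r). -/
/-! With `J` the all-ones matrix and `K = 1 + J`, one has `K⁻¹ = 1 - J / (m + 1)` and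
`C₂ = D M D` for `D = diag(p, 1 + p)` and `M = [[K, -1], [-1, 2K⁻¹]]`. In the principal
submatrix of `M` keeping the first block and `t` indices `f` of the second, the Schur complement
of `K` is `2 (K⁻¹)_ff - (K⁻¹)_ff = (K⁻¹)_ff`, so the minor is `det K · (1 - t / (m + 1))
= m + 1 - t`. For `t = m` this says `det M = 1`, and the Schur complement `K⁻¹` is positive
definite, so `M`, and with it `C₂`, is positive definite. -/

open Matrix
open scoped ComplexOrder

namespace Matrix

variable {ι κ 𝕜 : Type*}

def allOnes (ι 𝕜 : Type*) [One 𝕜] : Matrix ι ι 𝕜 := of fun _ _ => 1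

@[simp]
lemma allOnes_apply [One 𝕜] (i j : ι) : allOnes ι 𝕜 i j = 1 := rfl

lemma allOnes_submatrix [One 𝕜] (f : κ → ι) : (allOnes ι 𝕜).submatrix f f = allOnes κ 𝕜 := rfl

lemma fromBlocks_submatrix_sumMap_id {R : Type*} (A : Matrix ι ι R) (B : Matrix ι ι R)
    (C : Matrix ι ι R) (D : Matrix ι ι R) (f : κ → ι) :
    (fromBlocks A B C D).submatrix (Sum.map id f) (Sum.map id f) =
      fromBlocks A (B.submatrix id f) (C.submatrix f id) (D.submatrix f f) := by
  ext (i | i) (j | j) <;> rfl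

variable [Fintype ι]

lemma allOnes_mul_allOnes [NonAssocSemiring 𝕜] :
    allOnes ι 𝕜 * allOnes ι 𝕜 = (Fintype.card ι : 𝕜) • allOnes ι 𝕜 := by
  ext i j; simp [mul_apply]

variable [DecidableEq ι]

lemma det_one_add_smul_allOnes [CommRing 𝕜] (c : 𝕜) :
    (1 + c • allOnes ι 𝕜).det = 1 + c * Fintype.card ι := by
  have h : c • allOnes ι 𝕜 =
      replicateCol Unit (fun _ : ι => c) * replicateRow Unit (fun _ : ι => (1 : 𝕜)) := by
    ext i j; simp [mul_apply]
  rw [h, det_one_add_replicateCol_mul_replicateRow]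
  simp [dotProduct, mul_comm]

lemma inv_one_add_allOnes [Field 𝕜] [CharZero 𝕜] :
    (1 + allOnes ι 𝕜)⁻¹ = 1 - ((Fintype.card ι : 𝕜) + 1)⁻¹ • allOnes ι 𝕜 := by
  refine inv_eq_right_inv ?_
  set c := ((Fintype.card ι : 𝕜) + 1)⁻¹
  have hc : c * (Fintype.card ι + 1) = 1 := inv_mul_cancel₀ (Nat.cast_add_one_ne_zero _)
  rw [mul_sub, mul_one, Matrix.mul_smul, Matrix.add_mul, Matrix.one_mul, allOnes_mul_allOnes]
  calc 1 + allOnes ι 𝕜 - c • (allOnes ι 𝕜 + (Fintype.card ι : 𝕜) • allOnes ι 𝕜)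
      = 1 + (1 - c * (Fintype.card ι + 1)) • allOnes ι 𝕜 := by module
    _ = 1 := by rw [hc, sub_self, zero_smul, add_zero]

lemma posDef_one_add_allOnes : (1 + allOnes ι ℝ).PosDef := by
  refine .of_dotProduct_mulVec_pos (by ext; simp [Matrix.one_apply, eq_comm]) fun x hx => ?_
  have hJ : x ⬝ᵥ (allOnes ι ℝ *ᵥ x) = (∑ i, x i) ^ 2 := by
    simp only [dotProduct, mulVec, allOnes_apply, one_mul, sq, Finset.sum_mul]
  rw [star_trivial, add_mulVec, one_mulVec, dotProduct_add, hJ]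
  have := dotProduct_self_star_pos_iff.mpr hx
  rw [star_trivial] at this
  positivity

section fromBlocks

variable [Fintype κ] [DecidableEq κ]

lemma det_submatrix_fromBlocks_neg_one_two_smul_inv [Field 𝕜] {K : Matrix ι ι 𝕜}
    (hK : IsUnit K.det) (f : κ → ι) :
    ((fromBlocks K (-1) (-1) (2 • K⁻¹)).submatrix (Sum.map id f) (Sum.map id f)).det =
      K.det * (K⁻¹.submatrix f f).det := by
  let := K.invertibleOfIsUnitDet hK
  rw [fromBlocks_submatrix_sumMap_id, det_fromBlocks₁₁, invOf_eq_nonsing_inv]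
  congr 2
  ext i j
  simp [mul_apply, one_apply, two_mul]

lemma PosDef.fromBlocks_neg_one_two_smul_inv [RCLike 𝕜] {K : Matrix ι ι 𝕜} (hK : K.PosDef) :
    (fromBlocks K (-1) (-1) (2 • K⁻¹)).PosDef := by
  let := hK.isUnit.invertible
  have hschur : 2 • K⁻¹ - (-1 : Matrix ι ι 𝕜)ᴴ * K⁻¹ * (-1) = K⁻¹ := by
    simp only [conjTranspose_neg, conjTranspose_one, Matrix.neg_mul, Matrix.mul_neg, neg_neg,
      Matrix.one_mul, Matrix.mul_one, two_smul, add_sub_cancel_right]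
  have hpsd := (PosDef.fromBlocks₁₁ (-1) (2 • K⁻¹) hK).mpr (hschur ▸ hK.inv.posSemidef)
  rw [conjTranspose_neg, conjTranspose_one] at hpsd
  refine hpsd.posDef_iff_det_ne_zero.mpr ?_
  have hdet := det_submatrix_fromBlocks_neg_one_two_smul_inv (isUnit_det_of_invertible K) id
  rw [Sum.map_id_id, submatrix_id_id, submatrix_id_id, ← det_mul,
    mul_nonsing_inv _ (isUnit_det_of_invertible K), det_one] at hdet
  exact hdet ▸ one_ne_zero

lemma det_submatrix_fromBlocks_one_add_allOnes [Field 𝕜] [CharZero 𝕜] {f : κ → ι}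
    (hf : Function.Injective f) :
    ((fromBlocks (1 + allOnes ι 𝕜) (-1) (-1) (2 • (1 + allOnes ι 𝕜)⁻¹)).submatrix
      (Sum.map id f) (Sum.map id f)).det = (Fintype.card ι + 1 - Fintype.card κ : 𝕜) := by
  have hdet : (1 + allOnes ι 𝕜).det = Fintype.card ι + 1 := by
    simpa [add_comm] using det_one_add_smul_allOnes (ι := ι) (1 : 𝕜)
  have hn : (Fintype.card ι : 𝕜) + 1 ≠ 0 := Nat.cast_add_one_ne_zero _
  have hsub (c : 𝕜) : (1 - c • allOnes ι 𝕜).submatrix f f = 1 - c • allOnes κ 𝕜 := by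
    ext i j; simp [one_apply, hf.eq_iff]
  rw [det_submatrix_fromBlocks_neg_one_two_smul_inv (by rw [hdet]; exact hn.isUnit),
    inv_one_add_allOnes, hsub, sub_eq_add_neg, ← neg_smul, det_one_add_smul_allOnes, hdet]
  field_simp
  ring

end fromBlocks

section diagonal

variable [Fintype κ] [DecidableEq κ] {R : Type*}

lemma submatrix_diagonal_mul_mul_diagonal [NonUnitalNonAssocSemiring R] (d : ι → R)
    (M : Matrix ι ι R) (g : κ → ι) :
    (diagonal d * M * diagonal d).submatrix g g =
      diagonal (d ∘ g) * M.submatrix g g * diagonal (d ∘ g) := by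
  ext i j; simp

lemma det_diagonal_mul_mul_diagonal [CommRing R] (d : ι → R) (M : Matrix ι ι R) :
    (diagonal d * M * diagonal d).det = (∏ i, d i) ^ 2 * M.det := by
  rw [det_mul, det_mul, det_diagonal]; ring

lemma PosDef.diagonal_mul_mul_diagonal {M : Matrix ι ι ℝ} (hM : M.PosDef) {d : ι → ℝ}
    (hd : ∀ i, d i ≠ 0) : (diagonal d * M * diagonal d).PosDef := by
  have hinj : Function.Injective (diagonal d).mulVec :=
    mulVec_injective_of_isUnit (isUnit_diagonal.mpr (Pi.isUnit_iff.mpr fun i => (hd i).isUnit))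
  simpa using hM.conjTranspose_mul_mul_same hinj

end diagonal

end Matrix

section

variable {m : ℕ}

noncomputable def C₂ (p : Fin m → ℝ) : Matrix (Fin m ⊕ Fin m) (Fin m ⊕ Fin m) ℝ :=
  Matrix.fromBlocks
    (Matrix.of fun j k : Fin m => if j = k then 2 * p j ^ 2 else p j * p k)
    (Matrix.diagonal fun j => -(p j * (1 + p j)))
    (Matrix.diagonal fun j => -(p j * (1 + p j)))
    (Matrix.of fun j k : Fin m =>
      if j = k then 2 * m * (1 + p j) ^ 2 / (m + 1)
      else -2 * (1 + p j) * (1 + p k) / (m + 1))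

lemma C₂_eq_diagonal_mul_mul_diagonal (p : Fin m → ℝ) :
    C₂ p = diagonal (Sum.elim p fun j => 1 + p j) *
      fromBlocks (1 + allOnes (Fin m) ℝ) (-1) (-1) (2 • (1 + allOnes (Fin m) ℝ)⁻¹) *
      diagonal (Sum.elim p fun j => 1 + p j) := by
  rw [inv_one_add_allOnes, Fintype.card_fin]
  have hm : (m : ℝ) + 1 ≠ 0 := Nat.cast_add_one_ne_zero m
  ext (i | i) (j | j) <;> by_cases h : i = j <;>
    simp [C₂, h, one_apply, two_smul, -nsmul_eq_mul] <;> field_simp <;> ring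

lemma posDef_C₂ {p : Fin m → ℝ} (hp : ∀ j, 0 < p j) : (C₂ p).PosDef := by
  rw [C₂_eq_diagonal_mul_mul_diagonal]
  refine posDef_one_add_allOnes.fromBlocks_neg_one_two_smul_inv.diagonal_mul_mul_diagonal ?_
  rintro (j | j)
  · exact (hp j).ne'
  · exact (add_pos one_pos (hp j)).ne'

lemma det_submatrix_sumMap_C₂ (p : Fin m → ℝ) {t : ℕ} {f : Fin t → Fin m}
    (hf : Function.Injective f) :
    ((C₂ p).submatrix (Sum.map id f) (Sum.map id f)).det =
      ((∏ j, p j) * ∏ j, (1 + p (f j))) ^ 2 * (m + 1 - t) := by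
  rw [C₂_eq_diagonal_mul_mul_diagonal, submatrix_diagonal_mul_mul_diagonal,
    det_diagonal_mul_mul_diagonal, det_submatrix_fromBlocks_one_add_allOnes hf,
    Fintype.prod_sum_type]
  simp

lemma finSumFinEquiv_symm_comp_castLE_comp {m n r : ℕ} (hmr : m ≤ r) (h2 : r ≤ m + n)
    (h3 : r - m ≤ n) :
    (finSumFinEquiv.symm ∘ Fin.castLE h2) ∘
        finSumFinEquiv.trans (finCongr (Nat.add_sub_cancel' hmr)) =
      Sum.map id (Fin.castLE h3) := by
  funext j
  rcases j with j | j <;> simp only [Function.comp_apply, Equiv.symm_apply_eq] <;> ext <;> simp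

lemma det_C₂_leading_minor (p : Fin m → ℝ) {r : ℕ} (hmr : m ≤ r) (h2 : r ≤ m + m)
    (h3 : r - m ≤ m) :
    (((C₂ p).submatrix finSumFinEquiv.symm finSumFinEquiv.symm).submatrix
        (Fin.castLE h2) (Fin.castLE h2)).det =
      ((∏ j, p j) * ∏ j : Fin (r - m), (1 + p (Fin.castLE h3 j))) ^ 2 * ((2 * m + 1 : ℝ) - r) := by
  rw [submatrix_submatrix,
    ← det_submatrix_equiv_self (finSumFinEquiv.trans (finCongr (Nat.add_sub_cancel' hmr))),
    submatrix_submatrix, finSumFinEquiv_symm_comp_castLE_comp hmr h2 h3,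
    det_submatrix_sumMap_C₂ p (Fin.castLE_injective h3), Nat.cast_sub hmr]
  ring

end

theorem stmt_5_general (m : ℕ) (p : Fin m → ℝ)
    (hp : ∀ j, 0 < p j) :
    (Matrix.fromBlocks
        (Matrix.of fun j k : Fin m => if j = k then 2 * p j ^ 2 else p j * p k)
        (Matrix.diagonal fun j => -(p j * (1 + p j)))
        (Matrix.diagonal fun j => -(p j * (1 + p j)))
        (Matrix.of fun j k : Fin m =>
          if j = k then 2 * m * (1 + p j) ^ 2 / (m + 1)
          else -2 * (1 + p j) * (1 + p k) / (m + 1))).PosDef ∧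
    ∀ (r : ℕ) (h1 : m + 1 ≤ r) (h2 : r ≤ m + m) (h3 : r - m ≤ m),
      (((Matrix.fromBlocks
          (Matrix.of fun j k : Fin m => if j = k then 2 * p j ^ 2 else p j * p k)
          (Matrix.diagonal fun j => -(p j * (1 + p j)))
          (Matrix.diagonal fun j => -(p j * (1 + p j)))
          (Matrix.of fun j k : Fin m =>
            if j = k then 2 * m * (1 + p j) ^ 2 / (m + 1)
            else -2 * (1 + p j) * (1 + p k) / (m + 1))).submatrix
            finSumFinEquiv.symm finSumFinEquiv.symm).submatrix
          (Fin.castLE h2) (Fin.castLE h2)).det =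
        ((∏ j, p j) * ∏ j : Fin (r - m), (1 + p (Fin.castLE h3 j))) ^ 2 *
          ((2 * m + 1 : ℝ) - r) :=
  ⟨posDef_C₂ hp, fun _ h1 h2 h3 => det_C₂_leading_minor p (by omega) h2 h3⟩

theorem stmt_5 (m : ℕ) (hm : 1 ≤ m) (p : Fin m → ℝ)
    (hp : ∀ j, 0 < p j) (hp1 : ∀ j, p j < 1) :
    (Matrix.fromBlocks
        (Matrix.of fun j k : Fin m => if j = k then 2 * p j ^ 2 else p j * p k)
        (Matrix.diagonal fun j => -(p j * (1 + p j)))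
        (Matrix.diagonal fun j => -(p j * (1 + p j)))
        (Matrix.of fun j k : Fin m =>
          if j = k then 2 * m * (1 + p j) ^ 2 / (m + 1)
          else -2 * (1 + p j) * (1 + p k) / (m + 1))).PosDef ∧
    ∀ (r : ℕ) (h1 : m + 1 ≤ r) (h2 : r ≤ m + m) (h3 : r - m ≤ m),
      (((Matrix.fromBlocks
          (Matrix.of fun j k : Fin m => if j = k then 2 * p j ^ 2 else p j * p k)
          (Matrix.diagonal fun j => -(p j * (1 + p j)))
          (Matrix.diagonal fun j => -(p j * (1 + p j)))
          (Matrix.of fun j k : Fin m =>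
            if j = k then 2 * m * (1 + p j) ^ 2 / (m + 1)
            else -2 * (1 + p j) * (1 + p k) / (m + 1))).submatrix
            finSumFinEquiv.symm finSumFinEquiv.symm).submatrix
          (Fin.castLE h2) (Fin.castLE h2)).det =
        ((∏ j, p j) * ∏ j : Fin (r - m), (1 + p (Fin.castLE h3 j))) ^ 2 *
          ((2 * m + 1 : ℝ) - r) :=
  stmt_5_general m p hp
end

section
/- If (Q_n, P_{n,1}, …, P_{n,m}) and (Q̃_n, P̃_{n,1}, …, P̃_{n,m}) are two solutions of the linear Fourier–Padé conditions with Q_n and Q̃_n monic of exact degree |n|, then Q_n = Q̃_n and P_{n,j} = P̃_{n,j} for all j; i.e., the linear Fourier–Padé approximant is unique. -/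
/-!
The difference of two monic denominators of degree `|n|` has degree `< |n|`; since the
Fourier–Padé conditions are linear in `(Q_n, P_{n,1}, …, P_{n,m})`, the difference of the two
solutions is again a solution, so by the normality assumption it must vanish. The numerators are
then equal because they are read off from the denominator. Linearity needs the integrands to be
integrable: each `σ̂_j` is bounded on `Δ_0`, which lies at positive distance from `Δ_j`.
-/

open MeasureTheory Polynomial

lemma measurable_cauchyTransform (ν : Measure ℝ) [SFinite ν] :
    Measurable fun x : ℝ => ∫ t, (x - t)⁻¹ ∂ν :=
  (measurable_fst.sub measurable_snd).inv.stronglyMeasurable.integral_prod_right'.measurable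

lemma norm_cauchyTransform_le {ν : Measure ℝ} [IsFiniteMeasure ν] {t : Set ℝ}
    (hν : ∀ᵐ y ∂ν, y ∈ t) {x δ : ℝ} (hδ : 0 < δ) (hx : ∀ y ∈ t, δ ≤ |x - y|) :
    ‖∫ y, (x - y)⁻¹ ∂ν‖ ≤ δ⁻¹ * ν.real Set.univ := by
  refine norm_integral_le_of_norm_le_const ?_
  filter_upwards [hν] with y hy
  rw [Real.norm_eq_abs, abs_inv]
  exact inv_anti₀ hδ (hx y hy)

lemma exists_forall_norm_cauchyTransform_le {ν : Measure ℝ} [IsFiniteMeasure ν] {s t : Set ℝ}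
    (hs : IsCompact s) (ht : IsClosed t) (hst : Disjoint s t) (hν : ∀ᵐ y ∂ν, y ∈ t) :
    ∃ C, ∀ x ∈ s, ‖∫ y, (x - y)⁻¹ ∂ν‖ ≤ C := by
  obtain ⟨δ, hδ, hsep⟩ := Metric.exists_pos_forall_lt_edist hs ht hst
  refine ⟨(δ : ℝ)⁻¹ * ν.real Set.univ, fun x hx => norm_cauchyTransform_le hν hδ fun y hy => ?_⟩
  rw [← Real.dist_eq, dist_edist]
  exact (ENNReal.toReal_le_toReal ENNReal.coe_ne_top (edist_ne_top x y)).2 (hsep x hx y hy).le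

lemma Continuous.integrable_of_ae_mem_compact {X E : Type*} [TopologicalSpace X] [T2Space X]
    [MeasurableSpace X] [OpensMeasurableSpace X] [NormedAddCommGroup E] {μ : Measure X}
    [IsFiniteMeasure μ] {s : Set X} (hs : IsCompact s) (hμ : ∀ᵐ x ∂μ, x ∈ s) {g : X → E}
    (hg : Continuous g) : Integrable g μ := by
  rw [← Measure.restrict_eq_self_of_ae_mem hμ]
  exact hg.continuousOn.integrableOn_compact hs

lemma integrable_polynomial_mul_cauchyTransform_sub {μ ν : Measure ℝ} [IsFiniteMeasure μ]
    [IsFiniteMeasure ν] {s t : Set ℝ} (hs : IsCompact s) (ht : IsClosed t) (hst : Disjoint s t)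
    (hμ : ∀ᵐ x ∂μ, x ∈ s) (hν : ∀ᵐ y ∂ν, y ∈ t) (R S L : ℝ[X]) :
    Integrable (fun x => (R.eval x * ∫ y, (x - y)⁻¹ ∂ν - S.eval x) * L.eval x) μ := by
  obtain ⟨C, hC⟩ := exists_forall_norm_cauchyTransform_le hs ht hst hν
  have hRL : Integrable (fun x => (R * L).eval x * ∫ y, (x - y)⁻¹ ∂ν) μ :=
    ((R * L).continuous.integrable_of_ae_mem_compact hs hμ).mul_bdd
      (measurable_cauchyTransform ν).aestronglyMeasurable
      (by filter_upwards [hμ] with x hx using hC x hx)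
  have hSL : Integrable (fun x => (S * L).eval x) μ :=
    (S * L).continuous.integrable_of_ae_mem_compact hs hμ
  refine (hRL.sub hSL).congr (Filter.Eventually.of_forall fun x => ?_)
  simp only [Pi.sub_apply, eval_mul]
  ring

lemma Polynomial.Monic.degree_sub_lt_of_natDegree_eq {R : Type*} [Ring R] [Nontrivial R]
    {p q : R[X]} {N : ℕ} (hp : p.Monic) (hq : q.Monic) (hpN : p.natDegree = N)
    (hqN : q.natDegree = N) :
    (p - q).degree < N := by
  have hpq : p.degree = q.degree := by
    rw [degree_eq_natDegree hp.ne_zero, degree_eq_natDegree hq.ne_zero, hpN, hqN]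
  simpa [degree_eq_natDegree hp.ne_zero, hpN] using
    degree_sub_lt_left hpq hp.ne_zero (by rw [hp.leadingCoeff, hq.leadingCoeff])

lemma integral_polynomial_residual_sub {μ : Measure ℝ} {f : ℝ → ℝ} {Q Q' S S' L : ℝ[X]}
    (h : Integrable (fun x => (Q.eval x * f x - S.eval x) * L.eval x) μ)
    (h' : Integrable (fun x => (Q'.eval x * f x - S'.eval x) * L.eval x) μ) :
    ∫ x, ((Q - Q').eval x * f x - (S - S').eval x) * L.eval x ∂μ =
      ∫ x, (Q.eval x * f x - S.eval x) * L.eval x ∂μ -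
        ∫ x, (Q'.eval x * f x - S'.eval x) * L.eval x ∂μ := by
  rw [← integral_sub h h']
  congr 1 with x
  simp only [eval_sub]
  ring

theorem stmt_16_general (m : ℕ) (n : Fin m → ℕ) (N : ℕ)
    (Δ0 : Set ℝ) (Δ : Fin m → Set ℝ)
    (hΔ0 : ∃ a b : ℝ, a < b ∧ Δ0 = Set.Icc a b)
    (hΔ : ∀ j, ∃ a b : ℝ, a < b ∧ Δ j = Set.Icc a b)
    (hd0 : ∀ j, Disjoint Δ0 (Δ j))
    (σ0 : Measure ℝ) [IsFiniteMeasure σ0] (hσ0 : σ0 Δ0ᶜ = 0)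
    (σ : Fin m → Measure ℝ) [∀ j, IsFiniteMeasure (σ j)]
    (hσ : ∀ j, σ j (Δ j)ᶜ = 0)
    (ℓ : ℕ → Polynomial ℝ)
    -- two solutions of the linear Fourier–Padé conditions with monic Q of degree N
    (Q Q' : Polynomial ℝ) (P P' : Fin m → Polynomial ℝ)
    (hQm : Q.Monic) (hQdeg : Q.natDegree = N)
    (hQ'm : Q'.Monic) (hQ'deg : Q'.natDegree = N)
    (hPdeg : ∀ j, (P j).degree < N) (hP'deg : ∀ j, (P' j).degree < N)
    (hQorth : ∀ j, ∀ k < N + n j,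
      ∫ x, (Q.eval x * (∫ t, (x - t)⁻¹ ∂(σ j)) - (P j).eval x) * (ℓ k).eval x ∂σ0 = 0)
    (hQ'orth : ∀ j, ∀ k < N + n j,
      ∫ x, (Q'.eval x * (∫ t, (x - t)⁻¹ ∂(σ j)) - (P' j).eval x) * (ℓ k).eval x ∂σ0 = 0)
    -- P is determined from Q by its Fourier coefficients
    (hPdef : ∀ j, P j = ∑ i ∈ Finset.range N,
      (∫ x, Q.eval x * (∫ t, (x - t)⁻¹ ∂(σ j)) * (ℓ i).eval x ∂σ0) • ℓ i)
    (hP'def : ∀ j, P' j = ∑ i ∈ Finset.range N,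
      (∫ x, Q'.eval x * (∫ t, (x - t)⁻¹ ∂(σ j)) * (ℓ i).eval x ∂σ0) • ℓ i)
    -- every solution of the linear Fourier–Padé conditions has denominator of
    -- exact degree N (proved in the paper via the Angelesco structure)
    (hfull : ∀ (Q2 : Polynomial ℝ) (P2 : Fin m → Polynomial ℝ), Q2 ≠ 0 →
      Q2.degree ≤ (N : ℕ) → (∀ j, (P2 j).degree < N) →
      (∀ j, ∀ k < N + n j,
        ∫ x, (Q2.eval x * (∫ t, (x - t)⁻¹ ∂(σ j)) - (P2 j).eval x) * (ℓ k).eval x ∂σ0 = 0) →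
      Q2.natDegree = N) :
    Q = Q' ∧ ∀ j, P j = P' j := by
  obtain ⟨a, b, -, rfl⟩ := hΔ0
  have hint : ∀ (j : Fin m) (R S : ℝ[X]) (k : ℕ),
      Integrable (fun x => (R.eval x * ∫ t, (x - t)⁻¹ ∂(σ j) - S.eval x) * (ℓ k).eval x) σ0 := by
    intro j R S k
    obtain ⟨c, d, -, hΔj⟩ := hΔ j
    exact integrable_polynomial_mul_cauchyTransform_sub isCompact_Icc
      (hΔj ▸ isClosed_Icc) (hd0 j) (mem_ae_iff.2 hσ0) (mem_ae_iff.2 (hσ j)) R S (ℓ k)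
  have hQQ' : Q = Q' := by
    by_contra hne
    have hdeg := hQm.degree_sub_lt_of_natDegree_eq hQ'm hQdeg hQ'deg
    have horth : ∀ j, ∀ k < N + n j, ∫ x, ((Q - Q').eval x * (∫ t, (x - t)⁻¹ ∂(σ j)) -
        (P j - P' j).eval x) * (ℓ k).eval x ∂σ0 = 0 := by
      intro j k hk
      rw [integral_polynomial_residual_sub (hint j Q (P j) k) (hint j Q' (P' j) k),
        hQorth j k hk, hQ'orth j k hk, sub_zero]
    have hdegN := hfull (Q - Q') (fun j => P j - P' j) (sub_ne_zero.2 hne) hdeg.le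
      (fun j => (degree_sub_le _ _).trans_lt (max_lt (hPdeg j) (hP'deg j))) horth
    rw [degree_eq_natDegree (sub_ne_zero.2 hne), hdegN] at hdeg
    exact lt_irrefl _ hdeg
  refine ⟨hQQ', fun j => ?_⟩
  rw [hPdef j, hP'def j, hQQ']

theorem stmt_16 (m : ℕ) (hm : 1 ≤ m) (n : Fin m → ℕ) (N : ℕ) (hN : N = ∑ j, n j)
    (Δ0 : Set ℝ) (Δ : Fin m → Set ℝ)
    (hΔ0 : ∃ a b : ℝ, a < b ∧ Δ0 = Set.Icc a b)
    (hΔ : ∀ j, ∃ a b : ℝ, a < b ∧ Δ j = Set.Icc a b)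
    (hd0 : ∀ j, Disjoint Δ0 (Δ j)) (hdd : ∀ j k, j ≠ k → Disjoint (Δ j) (Δ k))
    (σ0 : Measure ℝ) [IsFiniteMeasure σ0] (hσ0 : σ0 Δ0ᶜ = 0)
    (σ : Fin m → Measure ℝ) [∀ j, IsFiniteMeasure (σ j)]
    (hσ : ∀ j, σ j (Δ j)ᶜ = 0)
    -- orthonormal polynomials with respect to σ0, with positive leading coefficient
    (ℓ : ℕ → Polynomial ℝ) (hldeg : ∀ k, (ℓ k).natDegree = k)
    (hlead : ∀ k, 0 < (ℓ k).leadingCoeff)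
    (horthon : ∀ k i, ∫ x, (ℓ k).eval x * (ℓ i).eval x ∂σ0 =
      if k = i then 1 else 0)
    -- two solutions of the linear Fourier–Padé conditions with monic Q of degree N
    (Q Q' : Polynomial ℝ) (P P' : Fin m → Polynomial ℝ)
    (hQm : Q.Monic) (hQdeg : Q.natDegree = N)
    (hQ'm : Q'.Monic) (hQ'deg : Q'.natDegree = N)
    (hPdeg : ∀ j, (P j).degree < N) (hP'deg : ∀ j, (P' j).degree < N)
    (hQorth : ∀ j, ∀ k < N + n j,
      ∫ x, (Q.eval x * (∫ t, (x - t)⁻¹ ∂(σ j)) - (P j).eval x) * (ℓ k).eval x ∂σ0 = 0)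
    (hQ'orth : ∀ j, ∀ k < N + n j,
      ∫ x, (Q'.eval x * (∫ t, (x - t)⁻¹ ∂(σ j)) - (P' j).eval x) * (ℓ k).eval x ∂σ0 = 0)
    -- P is determined from Q by its Fourier coefficients
    (hPdef : ∀ j, P j = ∑ i ∈ Finset.range N,
      (∫ x, Q.eval x * (∫ t, (x - t)⁻¹ ∂(σ j)) * (ℓ i).eval x ∂σ0) • ℓ i)
    (hP'def : ∀ j, P' j = ∑ i ∈ Finset.range N,
      (∫ x, Q'.eval x * (∫ t, (x - t)⁻¹ ∂(σ j)) * (ℓ i).eval x ∂σ0) • ℓ i)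
    -- every solution of the linear Fourier–Padé conditions has denominator of
    -- exact degree N (proved in the paper via the Angelesco structure)
    (hfull : ∀ (Q2 : Polynomial ℝ) (P2 : Fin m → Polynomial ℝ), Q2 ≠ 0 →
      Q2.degree ≤ (N : ℕ) → (∀ j, (P2 j).degree < N) →
      (∀ j, ∀ k < N + n j,
        ∫ x, (Q2.eval x * (∫ t, (x - t)⁻¹ ∂(σ j)) - (P2 j).eval x) * (ℓ k).eval x ∂σ0 = 0) →
      Q2.natDegree = N) :
    Q = Q' ∧ ∀ j, P j = P' j :=
  stmt_16_general m n N Δ0 Δ hΔ0 hΔ hd0 σ0 hσ0 σ hσ ℓ Q Q' P P' hQm hQdeg hQ'm hQ'deg hPdeg hP'deg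
    hQorth hQ'orth hPdef hP'def hfull
end
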